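/- Let X and Y be real random variables with |X| ≤ B and |Y| ≤ B almost surely, and let Λ₁, Λ₂ be i.i.d. uniformly distributed on [−γ, γ] with γ ≥ B, independent of (X, Y). Then E[γ² · sign(X + Λ₁) · sign(Y + Λ₂)] = E[XY]. -/

import Mathlib

open MeasureTheory ProbabilityTheory
open scoped ENNReal

noncomputable section

/-- `sgn x = 1` if `x ≥ 0`, and `-1` otherwise. -/
def sgn (x : ℝ) : ℝ := if 0 ≤ x then 1 else -1

/-- Truncation at level `η`: `x ↦ sign(x) · min {|x|, η}`. -/
def trunc (η x : ℝ) : ℝ := sgn x * min |x| η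

/-- The law of the uniform distribution on the interval `[-γ, γ]`. -/
def unifLaw (γ : ℝ) : Measure ℝ :=
  (ENNReal.ofReal (2 * γ))⁻¹ • (volume.restrict (Set.Icc (-γ) γ))

/-- The law of the uniform distribution on the cube `[-γ, γ]^d`. -/
def unifCubeLaw (d : ℕ) (γ : ℝ) : Measure (Fin d → ℝ) :=
  Measure.pi fun _ : Fin d => unifLaw γ

/-- The sub-Gaussian (ψ₂) norm of a real random variable. -/
def subgNorm {Ω : Type*} [MeasurableSpace Ω] (μ : Measure Ω) (X : Ω → ℝ) : ℝ :=
  sInf {t : ℝ | 0 < t ∧ ∫ ω, Real.exp (X ω ^ 2 / t ^ 2) ∂μ ≤ 2}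

/-- The sub-Gaussian (ψ₂) norm of a random vector: `sup_{‖V‖₂ = 1} ‖VᵀX‖_{ψ₂}`. -/
def subgNormVec {Ω : Type*} [MeasurableSpace Ω] {d : ℕ} (μ : Measure Ω)
    (X : Ω → Fin d → ℝ) : ℝ :=
  sSup {a : ℝ | ∃ V : Fin d → ℝ, ∑ i, V i ^ 2 = 1 ∧
    a = subgNorm μ fun ω => ∑ i, V i * X ω i}

/-- The Euclidean (ℓ₂) norm on `Fin d → ℝ`. -/
def l2Norm {d : ℕ} (v : Fin d → ℝ) : ℝ := Real.sqrt (∑ i, v i ^ 2)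

/-- The ℓ₁ norm on `Fin d → ℝ`. -/
def l1Norm {d : ℕ} (v : Fin d → ℝ) : ℝ := ∑ i, |v i|

/-- The Frobenius norm of a `d × d` matrix. -/
def frobNorm {d : ℕ} (A : Fin d → Fin d → ℝ) : ℝ := Real.sqrt (∑ i, ∑ j, A i j ^ 2)

/-- The entrywise maximum norm of a `d × d` matrix. -/
def maxNorm {d : ℕ} (A : Fin d → Fin d → ℝ) : ℝ := ⨆ i, ⨆ j, |A i j|

/-- The ℓ₂ → ℓ₂ operator (spectral) norm of a `d × d` matrix. -/
def opNorm {d : ℕ} (A : Fin d → Fin d → ℝ) : ℝ :=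
  sSup {a : ℝ | ∃ v : Fin d → ℝ, ∑ i, v i ^ 2 = 1 ∧
    a = Real.sqrt (∑ i, (∑ j, A i j * v j) ^ 2)}

/-- The singular values of a `d × d` real matrix (in some enumeration):
the square roots of the eigenvalues of `AᵀA`. -/
def singVals {d : ℕ} (A : Fin d → Fin d → ℝ) : Fin d → ℝ := fun i =>
  Real.sqrt ((Matrix.isHermitian_iff_isSymm.mpr (Matrix.isSymm_transpose_mul_self (Matrix.of A))).eigenvalues i)

/-- The nuclear norm: the sum of the singular values. -/
def nucNorm {d : ℕ} (A : Fin d → Fin d → ℝ) : ℝ := ∑ i, singVals A i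

/-- `|x| ^ q`, with the convention that it is `0` when `x = 0`
(so that `q = 0` counts nonzero entries). -/
def powAbs (q x : ℝ) : ℝ := if x = 0 then 0 else |x| ^ q

/-- Column-wise vectorization of a `d × d` matrix (indexed by pairs). -/
def vecM {d : ℕ} (A : Fin d → Fin d → ℝ) : Fin d × Fin d → ℝ := fun p => A p.1 p.2

/-- The standard basis matrix `eᵢ eⱼᵀ`. -/
def basisM {d : ℕ} (i j : Fin d) : Fin d → Fin d → ℝ := fun a b =>
  if a = i ∧ b = j then 1 else 0

/-- The law of the uniform distribution on `{eᵢ eⱼᵀ : i, j ∈ [d]}`. -/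
def mcLaw (d : ℕ) : Measure (Fin d → Fin d → ℝ) :=
  ((d : ℝ≥0∞) ^ 2)⁻¹ • ∑ i : Fin d, ∑ j : Fin d, Measure.dirac (basisM i j)

/-- The trace inner product `⟨A, B⟩ = Tr(AᵀB) = Σᵢⱼ Aᵢⱼ Bᵢⱼ`. -/
def minner {d : ℕ} (A B : Fin d → Fin d → ℝ) : ℝ := ∑ i, ∑ j, A i j * B i j

/-
A dither uniform on `[-γ, γ]` makes the one-bit quantizer unbiased up to scale: for `|x| ≤ γ`,
`sgn (x + Λ) = 1` exactly when `Λ ≥ -x`, an event of probability `(γ + x) / (2γ)`, so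
`E[γ · sgn (x + Λ)] = x`. Since the two dithers are independent of each other and of `(X, Y)`,
conditioning on `(X, Y)` factorizes the expectation into `X · Y`.
-/

lemma measurable_sgn : Measurable sgn :=
  Measurable.ite measurableSet_Ici measurable_const measurable_const

lemma abs_sgn (x : ℝ) : |sgn x| = 1 := by
  unfold sgn; split <;> simp

lemma sgn_add_eq_indicator_sub_one (x l : ℝ) :
    sgn (x + l) = (Set.Ici (-x)).indicator (fun _ => (2 : ℝ)) l - 1 := by
  by_cases h : -x ≤ l
  · norm_num [sgn, h, show 0 ≤ x + l by linarith]
  · simp [sgn, h, show ¬0 ≤ x + l by linarith]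

lemma isProbabilityMeasure_unifLaw {γ : ℝ} (hγ : 0 < γ) :
    IsProbabilityMeasure (unifLaw γ) := by
  constructor
  rw [unifLaw, Measure.smul_apply, Measure.restrict_apply MeasurableSet.univ, Set.univ_inter,
    Real.volume_Icc, smul_eq_mul, show γ - -γ = 2 * γ by ring]
  exact ENNReal.inv_mul_cancel (by simp [hγ]) ENNReal.ofReal_ne_top

lemma integral_sgn_add_unifLaw {γ x : ℝ} (hγ : 0 < γ) (hx : |x| ≤ γ) :
    ∫ l, sgn (x + l) ∂(unifLaw γ) = x / γ := by
  obtain ⟨hx₁, hx₂⟩ := abs_le.mp hx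
  have hIci : Set.Ici (-x) ∩ Set.Icc (-γ) γ = Set.Icc (-x) γ := by
    ext t
    simp only [Set.mem_inter_iff, Set.mem_Ici, Set.mem_Icc]
    grind
  simp_rw [sgn_add_eq_indicator_sub_one]
  rw [unifLaw, integral_smul_measure,
    integral_sub ((integrable_const 2).indicator measurableSet_Ici) (integrable_const 1),
    integral_indicator measurableSet_Ici, setIntegral_const, integral_const,
    measureReal_restrict_apply measurableSet_Ici, hIci, measureReal_restrict_apply_univ,
    Real.volume_real_Icc_of_le (by linarith), Real.volume_real_Icc_of_le (by linarith),
    ENNReal.toReal_inv, ENNReal.toReal_ofReal (by linarith)]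
  simp only [smul_eq_mul]
  field_simp
  ring

lemma integral_sq_mul_sgn_mul_sgn_unifLaw_prod {γ x y : ℝ} (hγ : 0 < γ) (hx : |x| ≤ γ)
    (hy : |y| ≤ γ) :
    ∫ l : ℝ × ℝ, γ ^ 2 * sgn (x + l.1) * sgn (y + l.2) ∂((unifLaw γ).prod (unifLaw γ)) =
      x * y := by
  have := isProbabilityMeasure_unifLaw hγ
  have hfactor : ∀ l : ℝ × ℝ,
      γ ^ 2 * sgn (x + l.1) * sgn (y + l.2) = (γ * sgn (x + l.1)) * (γ * sgn (y + l.2)) :=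
    fun l => by ring
  simp_rw [hfactor]
  rw [integral_prod_mul (fun l => γ * sgn (x + l)) (fun l => γ * sgn (y + l)),
    integral_const_mul, integral_const_mul, integral_sgn_add_unifLaw hγ hx,
    integral_sgn_add_unifLaw hγ hy]
  field_simp

lemma integrable_mul_sgn_add_mul_sgn_add {ν : Measure ((ℝ × ℝ) × (ℝ × ℝ))} [IsFiniteMeasure ν]
    (c : ℝ) : Integrable (fun p => c * sgn (p.1.1 + p.2.1) * sgn (p.1.2 + p.2.2)) ν := by
  refine Integrable.of_bound (C := |c|) (Measurable.aestronglyMeasurable ?_)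
    (ae_of_all _ fun p => ?_)
  · exact (measurable_const.mul (measurable_sgn.comp (by fun_prop))).mul
      (measurable_sgn.comp (by fun_prop))
  · simp [abs_sgn]

lemma ProbabilityTheory.IndepFun.integral_comp_eq_integral_integral
    {Ω α β : Type*} [MeasurableSpace Ω] [MeasurableSpace α] [MeasurableSpace β]
    {μ : Measure Ω} [IsFiniteMeasure μ] {Z : Ω → α} {W : Ω → β} (h : IndepFun Z W μ)
    (hZ : Measurable Z) (hW : Measurable W) {F : α × β → ℝ}
    (hF : Integrable F ((μ.map Z).prod (μ.map W))) :
    ∫ ω, F (Z ω, W ω) ∂μ = ∫ z, ∫ w, F (z, w) ∂(μ.map W) ∂(μ.map Z) := by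
  have hmap : μ.map (fun ω => (Z ω, W ω)) = (μ.map Z).prod (μ.map W) :=
    (indepFun_iff_map_prod_eq_prod_map_map hZ.aemeasurable hW.aemeasurable).mp h
  rw [← integral_prod F hF, ← hmap,
    integral_map (hZ.prodMk hW).aemeasurable (hmap ▸ hF.aestronglyMeasurable)]

theorem statement_1
    {Ω : Type*} [MeasurableSpace Ω] (μ : Measure Ω) [IsProbabilityMeasure μ]
    (X Y Λ₁ Λ₂ : Ω → ℝ) (B γ : ℝ)
    (hX : Measurable X) (hY : Measurable Y) (hΛ₁ : Measurable Λ₁) (hΛ₂ : Measurable Λ₂)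
    (hXb : ∀ᵐ ω ∂μ, |X ω| ≤ B) (hYb : ∀ᵐ ω ∂μ, |Y ω| ≤ B)
    (hγpos : 0 < γ) (hBγ : B ≤ γ)
    (hlaw₁ : Measure.map Λ₁ μ = unifLaw γ) (hlaw₂ : Measure.map Λ₂ μ = unifLaw γ)
    (hindepΛ : IndepFun Λ₁ Λ₂ μ)
    (hindep : IndepFun (fun ω => (X ω, Y ω)) (fun ω => (Λ₁ ω, Λ₂ ω)) μ) :
    ∫ ω, γ ^ 2 * sgn (X ω + Λ₁ ω) * sgn (Y ω + Λ₂ ω) ∂μ = ∫ ω, X ω * Y ω ∂μ := by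
  have := isProbabilityMeasure_unifLaw hγpos
  have hXY : Measurable fun ω => (X ω, Y ω) := hX.prodMk hY
  have hlawΛ : μ.map (fun ω => (Λ₁ ω, Λ₂ ω)) = (unifLaw γ).prod (unifLaw γ) := by
    rw [(indepFun_iff_map_prod_eq_prod_map_map hΛ₁.aemeasurable hΛ₂.aemeasurable).mp hindepΛ,
      hlaw₁, hlaw₂]
  have := Measure.isProbabilityMeasure_map (μ := μ) hXY.aemeasurable
  let F : (ℝ × ℝ) × (ℝ × ℝ) → ℝ := fun p =>
    γ ^ 2 * sgn (p.1.1 + p.2.1) * sgn (p.1.2 + p.2.2)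
  have hbounded : ∀ᵐ z ∂(μ.map fun ω => (X ω, Y ω)), |z.1| ≤ γ ∧ |z.2| ≤ γ := by
    rw [ae_map_iff hXY.aemeasurable (by measurability)]
    filter_upwards [hXb, hYb] with ω hx hy
    exact ⟨hx.trans hBγ, hy.trans hBγ⟩
  calc ∫ ω, γ ^ 2 * sgn (X ω + Λ₁ ω) * sgn (Y ω + Λ₂ ω) ∂μ
      = ∫ z, ∫ l, F (z, l) ∂((unifLaw γ).prod (unifLaw γ))
          ∂(μ.map fun ω => (X ω, Y ω)) := by
        rw [← hlawΛ]
        exact hindep.integral_comp_eq_integral_integral hXY (hΛ₁.prodMk hΛ₂)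
          (integrable_mul_sgn_add_mul_sgn_add _)
    _ = ∫ z, z.1 * z.2 ∂(μ.map fun ω => (X ω, Y ω)) :=
        integral_congr_ae (hbounded.mono fun z hz =>
          integral_sq_mul_sgn_mul_sgn_unifLaw_prod hγpos hz.1 hz.2)
    _ = ∫ ω, X ω * Y ω ∂μ :=
        integral_map hXY.aemeasurable
          (measurable_fst.mul measurable_snd).aestronglyMeasurable
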